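/- arXiv:2305.04150 — 3 statements merged into one kernel-verified Lean document; each statement's English description precedes it below -/
import Mathlib

section
/- Let θ: P → Q be a homomorphism of integral (cancellative) commutative monoids such that the induced homomorphism of quotient monoids P/P* → Q/Q* (where P* denotes the submonoid of units) is an isomorphism. Then the induced homomorphism from the pushout P ⊕_{P*} Q* to Q is an isomorphism of monoids. -/
/-- The congruence on a commutative monoid identifying two elements iff they agree
up to addition of units; the quotient is `M/M*`. -/
def modUnits (M : Type*) [AddCommMonoid M] : AddCon M where
  r x y := ∃ u v : M, IsAddUnit u ∧ IsAddUnit v ∧ x + u = y + v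
  iseqv := by
    refine ⟨fun x => ⟨0, 0, isAddUnit_zero, isAddUnit_zero, rfl⟩, ?_, ?_⟩
    · rintro x y ⟨u, v, hu, hv, h⟩
      exact ⟨v, u, hv, hu, h.symm⟩
    · rintro x y z ⟨u, v, hu, hv, h⟩ ⟨u', v', hu', hv', h'⟩
      refine ⟨u + u', v' + v, hu.add hu', hv'.add hv, ?_⟩
      calc x + (u + u') = x + u + u' := (add_assoc _ _ _).symm
        _ = y + v + u' := by rw [h]
        _ = y + u' + v := add_right_comm _ _ _
        _ = z + v' + v := by rw [h']
        _ = z + (v' + v) := add_assoc _ _ _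
  add' := by
    rintro a b c d ⟨u, v, hu, hv, h⟩ ⟨s, t, hs, ht, h'⟩
    refine ⟨u + s, v + t, hu.add hs, hv.add ht, ?_⟩
    calc a + c + (u + s) = (a + u) + (c + s) := add_add_add_comm _ _ _ _
      _ = (b + v) + (d + t) := by rw [h, h']
      _ = b + d + (v + t) := (add_add_add_comm _ _ _ _).symm

/-- The induced homomorphism `P/P* → Q/Q*`. -/
def inducedModUnits {P Q : Type*} [AddCommMonoid P] [AddCommMonoid Q] (θ : P →+ Q) :
    (modUnits P).Quotient →+ (modUnits Q).Quotient :=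
  AddCon.lift _ ((modUnits Q).mk'.comp θ) (by
    rintro x y ⟨u, v, hu, hv, h⟩
    simp only [AddCon.ker_rel, AddMonoidHom.comp_apply]
    refine (AddCon.eq _).mpr ⟨θ u, θ v, hu.map θ, hv.map θ, ?_⟩
    rw [← map_add, ← map_add, h])

/-- The submonoid of units (invertible elements) of a commutative monoid. -/
def unitsSubmonoid (Q : Type*) [AddCommMonoid Q] : AddSubmonoid Q where
  carrier := {x | IsAddUnit x}
  zero_mem' := isAddUnit_zero
  add_mem' := fun ha hb => ha.add hb

/-- The congruence presenting the pushout `P ⊕_{P*} Q*` of commutative monoids,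
along the inclusion `P* → P` and the restriction `θ|_{P*} : P* → Q*`. -/
def pushoutCon {P Q : Type*} [AddCommMonoid P] [AddCommMonoid Q] (θ : P →+ Q) :
    AddCon (P × unitsSubmonoid Q) :=
  addConGen fun a b => ∃ (u : P) (hu : IsAddUnit u),
    a = (u, 0) ∧ b = (0, ⟨θ u, hu.map θ⟩)

/-- The induced homomorphism `P ⊕_{P*} Q* → Q`, `(p, v) ↦ θ p + v`. -/
def pushoutToQ {P Q : Type*} [AddCommMonoid P] [AddCommMonoid Q] (θ : P →+ Q) :
    (pushoutCon θ).Quotient →+ Q :=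
  AddCon.lift _ (θ.coprod (unitsSubmonoid Q).subtype) (by
    refine AddCon.addConGen_le.2 ?_
    rintro a b ⟨u, hu, rfl, rfl⟩
    simp [AddCon.ker_rel])

/-!
Every element of `P ⊕_{P*} Q*` is the class of a pair `(p, v)` with `v ∈ Q*`, mapped to
`θ p + v`. Surjectivity of `P/P* → Q/Q*` writes each `q ∈ Q` as `θ p` up to units of `Q`.
For injectivity, if `θ p + v = θ p' + v'`, injectivity of `P/P* → Q/Q*` gives units `a, b`
with `p + a = p' + b`; moving `a` and `b` across the pushout relation and cancelling in `Q`
shows that the classes of `(p, v)` and `(p', v')` agree after adding the class of `(a, 0)`,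
a unit of the pushout, which can therefore be cancelled.
-/

section Pushout

variable {P Q : Type*} [AddCommMonoid P]

section AddCommMonoid

variable [AddCommMonoid Q] (θ : P →+ Q)

def pushoutMk (p : P) (v : unitsSubmonoid Q) : (pushoutCon θ).Quotient :=
  (pushoutCon θ).mk' (p, v)

theorem pushoutMk_surjective (x : (pushoutCon θ).Quotient) : ∃ p v, pushoutMk θ p v = x := by
  obtain ⟨⟨p, v⟩, rfl⟩ := (pushoutCon θ).mk'_surjective x
  exact ⟨p, v, rfl⟩

theorem pushoutMk_add (p p' : P) (v v' : unitsSubmonoid Q) :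
    pushoutMk θ p v + pushoutMk θ p' v' = pushoutMk θ (p + p') (v + v') :=
  rfl

theorem pushoutToQ_pushoutMk (p : P) (v : unitsSubmonoid Q) :
    pushoutToQ θ (pushoutMk θ p v) = θ p + v :=
  rfl

theorem inducedModUnits_mk (p : P) :
    inducedModUnits θ (p : (modUnits P).Quotient) = ((θ p : Q) : (modUnits Q).Quotient) :=
  rfl

theorem isAddUnit_pushoutMk {u : P} (hu : IsAddUnit u) : IsAddUnit (pushoutMk θ u 0) :=
  (hu.map (AddMonoidHom.inl P (unitsSubmonoid Q))).map (pushoutCon θ).mk'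

theorem pushoutMk_add_unit (p : P) (v : unitsSubmonoid Q) {u : P} (hu : IsAddUnit u) :
    pushoutMk θ (p + u) v = pushoutMk θ p (v + ⟨θ u, hu.map θ⟩) := by
  have hrel : pushoutMk θ u 0 = pushoutMk θ 0 ⟨θ u, hu.map θ⟩ :=
    (AddCon.eq _).2 (AddConGen.Rel.of _ _ ⟨u, hu, rfl, rfl⟩)
  rw [← add_zero v, ← pushoutMk_add, hrel, pushoutMk_add, add_zero, add_zero]

theorem pushoutToQ_surjective (h : Function.Surjective (inducedModUnits θ)) :
    Function.Surjective (pushoutToQ θ) := by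
  intro q
  obtain ⟨x, hx⟩ := h (q : (modUnits Q).Quotient)
  induction x using AddCon.induction_on with | H p =>
  obtain ⟨u, v, hu, hv, hpq⟩ := (AddCon.eq _).1 (inducedModUnits_mk θ p ▸ hx)
  let w : AddUnits Q := -hv.addUnit
  refine ⟨pushoutMk θ p ⟨u + w, hu.add w.isAddUnit⟩, ?_⟩
  calc pushoutToQ θ (pushoutMk θ p ⟨u + w, hu.add w.isAddUnit⟩)
      = θ p + u + w := (pushoutToQ_pushoutMk θ p _).trans (add_assoc _ _ _).symm
    _ = q + (hv.addUnit + w : AddUnits Q) := by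
        rw [hpq, add_assoc, AddUnits.val_add, hv.addUnit_spec]
    _ = q := by rw [add_neg_cancel, AddUnits.val_zero, add_zero]

end AddCommMonoid

theorem pushoutToQ_injective [AddCancelCommMonoid Q] (θ : P →+ Q)
    (h : Function.Injective (inducedModUnits θ)) : Function.Injective (pushoutToQ θ) := by
  intro x y hxy
  obtain ⟨p, v, rfl⟩ := pushoutMk_surjective θ x
  obtain ⟨p', v', rfl⟩ := pushoutMk_surjective θ y
  have hθ : θ p + v = θ p' + v' := by rwa [pushoutToQ_pushoutMk, pushoutToQ_pushoutMk] at hxy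
  obtain ⟨a, b, ha, hb, hab⟩ := (AddCon.eq _).1 <| h <| (AddCon.eq _).2 ⟨v, v', v.2, v'.2, hθ⟩
  have hv : v + ⟨θ b, hb.map θ⟩ = v' + ⟨θ a, ha.map θ⟩ := by
    refine Subtype.ext (add_left_cancel (a := θ p + θ p') ?_)
    calc θ p + θ p' + (v + θ b) = (θ p + v) + θ (p' + b) := by rw [map_add]; abel
      _ = (θ p' + v') + θ (p + a) := by rw [hθ, hab]
      _ = θ p + θ p' + (v' + θ a) := by rw [map_add]; abel
  refine (isAddUnit_pushoutMk θ ha).add_right_cancel ?_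
  calc pushoutMk θ p v + pushoutMk θ a 0
      = pushoutMk θ (p' + b) v := by rw [pushoutMk_add, hab, add_zero]
    _ = pushoutMk θ (p' + a) v' := by
        rw [pushoutMk_add_unit θ p' v hb, hv, pushoutMk_add_unit θ p' v' ha]
    _ = pushoutMk θ p' v' + pushoutMk θ a 0 := by rw [pushoutMk_add, add_zero]

end Pushout

/-- Let `θ : P → Q` be a homomorphism of integral commutative monoids such
that the induced homomorphism `P/P* → Q/Q*` is an isomorphism.  Then the induced
homomorphism from the pushout `P ⊕_{P*} Q*` to `Q` is an isomorphism of monoids. -/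
theorem stmt0 {P Q : Type*} [AddCancelCommMonoid P] [AddCancelCommMonoid Q]
    (θ : P →+ Q) (hiso : Function.Bijective (inducedModUnits θ)) :
    Function.Bijective (pushoutToQ θ) :=
  ⟨pushoutToQ_injective θ hiso.1, pushoutToQ_surjective θ hiso.2⟩
end

section
/- Let P be an integral commutative monoid with involution w, and let (i♯i*P)^ex be the monoid P ⊕ P^gp with involution (x,y) ↦ (w(x), w(x)-w(y)). Then the fixed point submonoid of (i♯i*P)^ex is isomorphic to the submonoid M = {y ∈ P^gp : y + w(y) ∈ P} of P^gp, via the map (x,y) ↦ y. -/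
section
variable {G : Type*} [AddCommGroup G] (P : AddSubmonoid G)

/-- The fixed points of the involution `(x,y) ↦ (w x, w x - w y)` on `P ⊕ P^gp`
(the monoid `(i♯i*P)^ex`), as a submonoid of `P × G` where `G = P^gp`. -/
def exFixed (w : G →+ G) : AddSubmonoid (P × G) where
  carrier := {z | w (z.1 : G) = (z.1 : G) ∧ w (z.1 : G) - w z.2 = z.2}
  zero_mem' := by simp
  add_mem' := by
    rintro a b ⟨ha1, ha2⟩ ⟨hb1, hb2⟩
    refine ⟨?_, ?_⟩
    · simp only [Prod.fst_add, AddSubmonoid.coe_add, map_add, ha1, hb1]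
    · simp only [Prod.fst_add, Prod.snd_add, AddSubmonoid.coe_add, map_add]
      conv_rhs => rw [← ha2, ← hb2]
      abel

/-- The submonoid `M = {y ∈ P^gp : y + w y ∈ P}` of `P^gp`. -/
def repleteFixed (w : G →+ G) : AddSubmonoid G where
  carrier := {y | y + w y ∈ P}
  zero_mem' := by simpa using P.zero_mem
  add_mem' := by
    intro a b ha hb
    simp only [Set.mem_setOf_eq, map_add] at *
    have := P.add_mem ha hb
    rwa [add_add_add_comm] at this

/-- Let `P` be an integral commutative monoid with involution `w`
(realized as a submonoid of its group completion `G = P^gp`, along which `w` extends).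
The fixed point submonoid of `(i♯i*P)^ex = P ⊕ P^gp` with the involution
`(x,y) ↦ (w x, w x - w y)` is isomorphic to `M = {y ∈ P^gp : y + w y ∈ P}` via
`(x, y) ↦ y`. -/
theorem stmt7 (w : G →+ G) (hw : ∀ g, w (w g) = g) (hwP : ∀ x ∈ P, w x ∈ P)
    (hgen : ∀ g : G, ∃ a ∈ P, ∃ b ∈ P, g = a - b) :
    ∃ e : exFixed P w ≃+ repleteFixed P w,
      ∀ z : exFixed P w, ((e z : G)) = ((z : P × G).2) := by
  have key : ∀ z : exFixed P w, ((z : P × G).1 : G) = (z : P × G).2 + w (z : P × G).2 := by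
    rintro ⟨⟨x, y⟩, hx, hy⟩
    have hx' : w (x : G) = x := hx
    have h : w (x : G) - w y = y := hy
    rw [hx'] at h
    exact sub_eq_iff_eq_add.mp h
  refine ⟨{
    toFun := fun z => ⟨(z : P × G).2, by
      show (z : P × G).2 + w (z : P × G).2 ∈ P
      rw [← key z]
      exact (z : P × G).1.2⟩
    invFun := fun y => ⟨(⟨(y : G) + w y, y.2⟩, (y : G)), by
      constructor
      · simp [map_add, hw, add_comm]
      · simp [map_add, hw]⟩
    left_inv := by
      rintro ⟨⟨x, y⟩, hz⟩
      have := key ⟨⟨x, y⟩, hz⟩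
      simp only at this ⊢
      ext <;> simp [← this]
    right_inv := by rintro ⟨y, hy⟩; rfl
    map_add' := by rintro z₁ z₂; rfl }, fun z => rfl⟩

end
end

section
/- Let P be a commutative monoid with involution. Then the dihedral replete nerve N^direp P is isomorphic as a dihedral set to P × N^σ(P^gp), where N^σ denotes the real nerve: in simplicial degree q the isomorphism sends (x; g_0,...,g_q) ∈ (N^di P^gp ×_{P^gp} P)_q to (x, g_1 - g_0, ..., g_q - g_{q-1}) style coordinates, i.e., (x_0,...,x_q) with Σx_i = x corresponds to (x, x_1, x_1+x_2, ..., x_1+...+x_q) data. -/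
/-!
`Ψ` keeps `s` and replaces `(x₀, …, x_q)` by the partial sums `y_j = x₁ + ⋯ + x_j` of its
tail. On the fibre `∑ xᵢ = s` the dropped entry is recovered as `x₀ = s - y_q`, so `Ψ` is
inverted by taking successive differences. Partial sums are determined by `y₀ = 0` and
`y_j = y_{j-1} + x_j`, so the action of each dihedral structure map on partial sums is found
by checking this recursion for the proposed formula. Only the cyclic operator, which moves
`x₀ = s - y_q` into position `1`, needs the fibre condition.
-/

section DihedralNerve

variable {P : Type*} [AddCommMonoid P]

/-- Face maps of the dihedral nerve (cyclic for the last face). -/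
def dFace (q : ℕ) (i : Fin (q + 2)) (x : Fin (q + 2) → P) : Fin (q + 1) → P :=
  if (i : ℕ) = q + 1 then
    fun j => if (j : ℕ) = 0 then x (Fin.last (q + 1)) + x 0 else x j.castSucc
  else
    fun j =>
      if (j : ℕ) < (i : ℕ) then x j.castSucc
      else if (j : ℕ) = (i : ℕ) then x j.castSucc + x j.succ
      else x j.succ

/-- Degeneracy maps of the dihedral nerve (inserting the unit `0`). -/
def dDegen (q : ℕ) (i : Fin (q + 1)) (x : Fin (q + 1) → P) : Fin (q + 2) → P :=
  fun j =>
    if h : (j : ℕ) ≤ (i : ℕ) then x ⟨j, by have := i.isLt; omega⟩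
    else if (j : ℕ) = (i : ℕ) + 1 then 0
    else x ⟨(j : ℕ) - 1, by have := j.isLt; omega⟩

/-- Cyclic operator of the dihedral nerve. -/
def dCyc (q : ℕ) (x : Fin (q + 1) → P) : Fin (q + 1) → P := fun j => x (j - 1)

/-- Involution of the dihedral nerve: `(x₀, …, x_q) ↦ (w x₀, w x_q, …, w x₁)`. -/
def dInv (w : P → P) (q : ℕ) (x : Fin (q + 1) → P) : Fin (q + 1) → P :=
  fun j => w (x (-j))

end DihedralNerve

section Replete

variable {G : Type*} [AddCommGroup G]

/-- `q`-simplices of the dihedral replete nerve `N^direp P = N^di(P^gp) ×_{P^gp} P`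
of a monoid `P` realized as a submonoid of its group completion `G = P^gp`. -/
def RepN (P : AddSubmonoid G) (q : ℕ) : Set ((Fin (q + 1) → G) × G) :=
  {z | z.2 ∈ P ∧ ∑ j, z.1 j = z.2}

/-- Faces of the replete nerve. -/
def rFace (q : ℕ) (i : Fin (q + 2)) (z : (Fin (q + 2) → G) × G) :
    (Fin (q + 1) → G) × G := (dFace q i z.1, z.2)

/-- Degeneracies of the replete nerve. -/
def rDegen (q : ℕ) (i : Fin (q + 1)) (z : (Fin (q + 1) → G) × G) :
    (Fin (q + 2) → G) × G := (dDegen q i z.1, z.2)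

/-- Cyclic operator of the replete nerve. -/
def rCyc (q : ℕ) (z : (Fin (q + 1) → G) × G) : (Fin (q + 1) → G) × G :=
  (dCyc q z.1, z.2)

/-- Involution of the replete nerve. -/
def rInv (w : G → G) (q : ℕ) (z : (Fin (q + 1) → G) × G) : (Fin (q + 1) → G) × G :=
  (dInv w q z.1, w z.2)

/-! ### The target `P × N^σ(P^gp)`

A `q`-simplex of `P × N^σ(P^gp)` is encoded as a pair `(s, Y)` with `s ∈ P` and
`Y : Fin (q+1) → G`, `Y 0 = 0`: here `(Y 1, …, Y q)` are the partial sums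
`x₁, x₁ + x₂, …` of a bar-construction simplex `(x₁, …, x_q)` of `N^σ(P^gp)`.
The structure maps below are the dihedral structure maps of `P × N^σ(P^gp)`
in these coordinates. -/

/-- `q`-simplices of `P × N^σ(P^gp)` in partial-sum coordinates. -/
def TN (P : AddSubmonoid G) (q : ℕ) : Set (G × (Fin (q + 1) → G)) :=
  {z | z.1 ∈ P ∧ z.2 0 = 0}

/-- Faces of `P × N^σ(P^gp)`. -/
def tFace (q : ℕ) (i : Fin (q + 2)) (z : G × (Fin (q + 2) → G)) :
    G × (Fin (q + 1) → G) :=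
  (z.1, fun j =>
    if (i : ℕ) = 0 then z.2 j.succ - z.2 1
    else if (j : ℕ) < (i : ℕ) then z.2 j.castSucc
    else z.2 j.succ)

/-- Degeneracies of `P × N^σ(P^gp)`. -/
def tDegen (q : ℕ) (i : Fin (q + 1)) (z : G × (Fin (q + 1) → G)) :
    G × (Fin (q + 2) → G) :=
  (z.1, fun j =>
    if h : (j : ℕ) ≤ (i : ℕ) then z.2 ⟨j, by have := i.isLt; omega⟩
    else z.2 ⟨(j : ℕ) - 1, by have := j.isLt; omega⟩)

/-- Cyclic operator of `P × N^σ(P^gp)`. -/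
def tCyc (q : ℕ) (z : G × (Fin (q + 1) → G)) : G × (Fin (q + 1) → G) :=
  (z.1, fun j =>
    if h : (j : ℕ) = 0 then 0
    else z.1 - z.2 (Fin.last q) + z.2 ⟨(j : ℕ) - 1, by have := j.isLt; omega⟩)

/-- Involution of `P × N^σ(P^gp)` (the real structure of the real nerve). -/
def tInv (w : G → G) (q : ℕ) (z : G × (Fin (q + 1) → G)) : G × (Fin (q + 1) → G) :=
  (w z.1, fun j => w (z.2 (Fin.last q) - z.2 (Fin.last q - j)))

end Replete


section TailSum

variable {G : Type*} [AddCommGroup G] {m : ℕ}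

def tailSum (X : Fin (m + 1) → G) (n : ℕ) : G :=
  ∑ i ∈ Finset.univ.filter (fun i : Fin (m + 1) => 0 < (i : ℕ) ∧ (i : ℕ) ≤ n), X i

lemma tailSum_zero (X : Fin (m + 1) → G) : tailSum X 0 = 0 :=
  Finset.sum_eq_zero fun i hi => by simp at hi; omega

lemma tailSum_eq_tailSum_sub_one_add (X : Fin (m + 1) → G) {j : Fin (m + 1)} (hj : j ≠ 0) :
    tailSum X j = tailSum X ((j : ℕ) - 1) + X j := by
  have hj' : (j : ℕ) ≠ 0 := Fin.val_ne_zero_iff.mpr hj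
  have hsplit : Finset.univ.filter (fun i : Fin (m + 1) => 0 < (i : ℕ) ∧ (i : ℕ) ≤ j) =
      insert j
        (Finset.univ.filter fun i : Fin (m + 1) => 0 < (i : ℕ) ∧ (i : ℕ) ≤ (j : ℕ) - 1) := by
    ext i
    simp only [Finset.mem_filter, Finset.mem_univ, true_and, Finset.mem_insert, Fin.ext_iff]
    omega
  rw [tailSum, hsplit, Finset.sum_insert (by simp), add_comm]
  rfl

lemma sum_eq_add_tailSum (X : Fin (m + 1) → G) : ∑ j, X j = X 0 + tailSum X m := by
  have hrest : Finset.univ.filter (fun i : Fin (m + 1) => 0 < (i : ℕ) ∧ (i : ℕ) ≤ m) =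
      Finset.univ.erase 0 := by
    ext i
    simp only [Finset.mem_filter, Finset.mem_univ, true_and, Finset.mem_erase, and_true,
      ← Fin.val_ne_zero_iff]
    have := i.isLt
    omega
  rw [tailSum, hrest, Finset.add_sum_erase _ _ (Finset.mem_univ 0)]

lemma tailSum_eq_of_recursion {X F : Fin (m + 1) → G} (h0 : F 0 = 0)
    (hsucc : ∀ j, j ≠ 0 → F j = F (j - 1) + X j) (j : Fin (m + 1)) : tailSum X j = F j := by
  induction j using Fin.induction with
  | zero => simpa [h0] using tailSum_zero X
  | succ k ih =>
    have hpred : k.succ - 1 = k.castSucc := by ext; simp [Fin.coe_sub_one]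
    rw [tailSum_eq_tailSum_sub_one_add X (Fin.succ_ne_zero k), hsucc _ (Fin.succ_ne_zero k),
      hpred, Fin.val_succ, Nat.add_sub_cancel, ← Fin.val_castSucc, ih]

end TailSum

section NerveInTailSums

variable {G : Type*} [AddCommGroup G] {m : ℕ}

lemma dFace_apply_of_ne_zero {P : Type*} [AddCommMonoid P] (q : ℕ) (i : Fin (q + 2))
    (x : Fin (q + 2) → P) {j : Fin (q + 1)} (hj : j ≠ 0) :
    dFace q i x j = if (j : ℕ) < i then x j.castSucc
      else if (j : ℕ) = i then x j.castSucc + x j.succ else x j.succ := by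
  have := Fin.val_ne_zero_iff.mpr hj
  have := j.isLt
  unfold dFace
  split_ifs <;> dsimp only <;> split_ifs <;> first | rfl | omega

lemma tailSum_dFace (X : Fin (m + 2) → G) (i : Fin (m + 2)) (j : Fin (m + 1)) :
    tailSum (dFace m i X) j = if (i : ℕ) = 0 then tailSum X (j + 1) - tailSum X 1
      else if (j : ℕ) < i then tailSum X j else tailSum X (j + 1) := by
  refine tailSum_eq_of_recursion (F := fun j : Fin (m + 1) => if (i : ℕ) = 0 then
      tailSum X (j + 1) - tailSum X 1 else if (j : ℕ) < i then tailSum X j else tailSum X (j + 1))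
    ?_ (fun j hj => ?_) j
  · split_ifs <;> simp_all [tailSum_zero]
  have h1 := tailSum_eq_tailSum_sub_one_add X (j := j.castSucc) (by simpa using hj)
  have h2 := tailSum_eq_tailSum_sub_one_add X (j := j.succ) (Fin.succ_ne_zero j)
  have hj1 : (j : ℕ) - 1 + 1 = j := Nat.succ_pred_eq_of_ne_zero (Fin.val_ne_zero_iff.mpr hj)
  simp only [Fin.val_castSucc, Fin.val_succ, Nat.add_sub_cancel] at h1 h2
  simp only [Fin.coe_sub_one, hj, if_false, hj1, dFace_apply_of_ne_zero m i X hj]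
  split_ifs <;> first | omega | (simp only [h1, h2]; abel)

lemma tailSum_dDegen (X : Fin (m + 1) → G) (i : Fin (m + 1)) (j : Fin (m + 2)) :
    tailSum (dDegen m i X) j = if (j : ℕ) ≤ i then tailSum X j else tailSum X (j - 1) := by
  refine tailSum_eq_of_recursion (F := fun j : Fin (m + 2) =>
      if (j : ℕ) ≤ i then tailSum X j else tailSum X (j - 1)) (by simp [tailSum_zero])
    (fun j hj => ?_) j
  have hj0 := Fin.val_ne_zero_iff.mpr hj
  simp only [dDegen, Fin.coe_sub_one, hj, if_false]
  rcases lt_trichotomy (j : ℕ) (i + 1) with hlt | heq | hgt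
  · rw [if_pos (by omega), if_pos (by omega), dif_pos (by omega)]
    exact tailSum_eq_tailSum_sub_one_add X (j := ⟨j, by omega⟩) (Fin.val_ne_zero_iff.mp hj0)
  · rw [if_neg (by omega), if_pos (by omega), dif_neg (by omega), if_pos heq, add_zero]
  · rw [if_neg (by omega), if_neg (by omega), dif_neg (by omega), if_neg (by omega)]
    exact tailSum_eq_tailSum_sub_one_add X (j := ⟨j - 1, by omega⟩)
      (Fin.val_ne_zero_iff.mp (show (j : ℕ) - 1 ≠ 0 by omega))

lemma tailSum_dCyc (X : Fin (m + 1) → G) (j : Fin (m + 1)) :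
    tailSum (dCyc m X) j = if (j : ℕ) = 0 then 0 else X 0 + tailSum X (j - 1) := by
  refine tailSum_eq_of_recursion (F := fun j : Fin (m + 1) =>
      if (j : ℕ) = 0 then 0 else X 0 + tailSum X (j - 1)) (by simp)
    (fun j hj => ?_) j
  have hj0 := Fin.val_ne_zero_iff.mpr hj
  simp only [dCyc, Fin.coe_sub_one, hj, if_false]
  rw [if_neg hj0]
  by_cases h1 : (j : ℕ) - 1 = 0
  · have hpred : j - 1 = 0 := Fin.ext (by simp [Fin.coe_sub_one, hj, h1])
    rw [if_pos h1, h1, hpred, tailSum_zero, add_zero, zero_add]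
  · have hpred := tailSum_eq_tailSum_sub_one_add X (j := j - 1)
      (Fin.val_ne_zero_iff.mp (by simpa [Fin.coe_sub_one, hj] using h1))
    simp only [Fin.coe_sub_one, hj, if_false] at hpred
    rw [if_neg h1, hpred, add_assoc]

lemma tailSum_dInv (w : G →+ G) (X : Fin (m + 1) → G) (j : Fin (m + 1)) :
    tailSum (dInv w m X) j = w (tailSum X m - tailSum X (m - j)) := by
  refine tailSum_eq_of_recursion (F := fun j : Fin (m + 1) =>
      w (tailSum X m - tailSum X (m - j))) (by simp)
    (fun j hj => ?_) j
  have hj0 := Fin.val_ne_zero_iff.mpr hj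
  have h1 := tailSum_eq_tailSum_sub_one_add X (neg_ne_zero.mpr hj)
  simp only [Fin.val_neg, hj, if_false] at h1
  simp only [dInv, Fin.coe_sub_one, hj, if_false]
  rw [← map_add, show m - ((j : ℕ) - 1) = m + 1 - j by omega,
    show m - (j : ℕ) = m + 1 - j - 1 by omega, h1]
  congr 1
  abel

end NerveInTailSums

section PartialSumMap

variable {G : Type*} [AddCommGroup G]

def partialSumMap (q : ℕ) (z : (Fin (q + 1) → G) × G) : G × (Fin (q + 1) → G) :=
  (z.2, fun j => tailSum z.1 j)

def differenceMap (q : ℕ) (y : G × (Fin (q + 1) → G)) : (Fin (q + 1) → G) × G :=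
  (fun j => if j = 0 then y.1 - y.2 (Fin.last q) else y.2 j - y.2 (j - 1), y.1)

lemma tailSum_differenceMap {q : ℕ} {y : G × (Fin (q + 1) → G)} (hy : y.2 0 = 0)
    (j : Fin (q + 1)) : tailSum (differenceMap q y).1 j = y.2 j :=
  tailSum_eq_of_recursion hy (fun j hj => by simp [differenceMap, hj]) j

variable (P : AddSubmonoid G) (q : ℕ)

lemma mapsTo_partialSumMap : Set.MapsTo (partialSumMap q) (RepN P q) (TN P q) :=
  fun _ hz => ⟨hz.1, tailSum_zero _⟩

lemma mapsTo_differenceMap : Set.MapsTo (differenceMap q) (TN P q) (RepN P q) := by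
  intro y hy
  refine ⟨hy.1, ?_⟩
  have hlast := tailSum_differenceMap hy.2 (Fin.last q)
  rw [Fin.val_last] at hlast
  rw [sum_eq_add_tailSum, hlast]
  simp [differenceMap]

lemma bijOn_partialSumMap : Set.BijOn (partialSumMap q) (RepN P q) (TN P q) := by
  refine Set.InvOn.bijOn ⟨fun z hz => ?_, fun y hy => ?_⟩ (mapsTo_partialSumMap P q)
    (mapsTo_differenceMap P q)
  · refine Prod.ext (funext fun j => ?_) rfl
    by_cases hj : j = 0
    · simp [differenceMap, partialSumMap, hj, ← hz.2, sum_eq_add_tailSum]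
    · simp [differenceMap, partialSumMap, hj, tailSum_eq_tailSum_sub_one_add z.1 hj,
        Fin.coe_sub_one]
  · exact Prod.ext rfl (funext (tailSum_differenceMap hy.2))

lemma partialSumMap_rFace (i : Fin (q + 2)) (z : (Fin (q + 2) → G) × G) :
    partialSumMap q (rFace q i z) = tFace q i (partialSumMap (q + 1) z) :=
  Prod.ext rfl (funext fun j => by simp [partialSumMap, rFace, tFace, tailSum_dFace])

lemma partialSumMap_rDegen (i : Fin (q + 1)) (z : (Fin (q + 1) → G) × G) :
    partialSumMap (q + 1) (rDegen q i z) = tDegen q i (partialSumMap q z) :=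
  Prod.ext rfl (funext fun j => by
    simp only [partialSumMap, rDegen, tDegen, tailSum_dDegen]
    split_ifs <;> rfl)

lemma partialSumMap_rCyc {z : (Fin (q + 1) → G) × G} (hz : ∑ j, z.1 j = z.2) :
    partialSumMap q (rCyc q z) = tCyc q (partialSumMap q z) :=
  Prod.ext rfl (funext fun j => by
    simp only [partialSumMap, rCyc, tCyc, tailSum_dCyc, ← hz, sum_eq_add_tailSum, Fin.val_last,
      add_sub_cancel_right]
    split_ifs <;> rfl)

lemma partialSumMap_rInv (w : G →+ G) (z : (Fin (q + 1) → G) × G) :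
    partialSumMap q (rInv w q z) = tInv w q (partialSumMap q z) :=
  Prod.ext rfl (funext fun j => by
    simp [partialSumMap, rInv, tInv, tailSum_dInv, Fin.last_sub, Fin.val_rev])

variable {P q}

lemma tFace_mem_TN (i : Fin (q + 2)) {z : G × (Fin (q + 2) → G)} (hz : z ∈ TN P (q + 1)) :
    tFace q i z ∈ TN P q := by
  refine ⟨hz.1, ?_⟩
  by_cases hi : (i : ℕ) = 0
  · simp [tFace, hi]
  · simpa [tFace, hi, Nat.pos_of_ne_zero hi] using hz.2

lemma tDegen_mem_TN (i : Fin (q + 1)) {z : G × (Fin (q + 1) → G)} (hz : z ∈ TN P q) :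
    tDegen q i z ∈ TN P (q + 1) :=
  ⟨hz.1, by simpa [tDegen] using hz.2⟩

lemma tCyc_mem_TN {z : G × (Fin (q + 1) → G)} (hz : z ∈ TN P q) : tCyc q z ∈ TN P q :=
  ⟨hz.1, by simp [tCyc]⟩

lemma tInv_mem_TN {w : G →+ G} (hwP : ∀ a ∈ P, w a ∈ P) {z : G × (Fin (q + 1) → G)}
    (hz : z ∈ TN P q) : tInv w q z ∈ TN P q :=
  ⟨hwP _ hz.1, by simp [tInv]⟩

end PartialSumMap

theorem stmt11_general {G : Type*} [AddCommGroup G] (P : AddSubmonoid G)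
    (w : G →+ G) (hwP : ∀ a ∈ P, w a ∈ P) :
    let Ψ : ∀ q : ℕ, ((Fin (q + 1) → G) × G) → (G × (Fin (q + 1) → G)) :=
      fun q z => (z.2, fun j =>
        ∑ i ∈ Finset.univ.filter (fun i : Fin (q + 1) => 0 < (i : ℕ) ∧ (i : ℕ) ≤ (j : ℕ)),
          z.1 i)
    -- Ψ is a degreewise bijection …
    (∀ q, Set.BijOn (Ψ q) (RepN P q) (TN P q)) ∧
    -- … the target structure maps preserve the target simplices …
    (∀ (q : ℕ) (i : Fin (q + 2)) z, z ∈ TN P (q + 1) → tFace q i z ∈ TN P q) ∧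
    (∀ (q : ℕ) (i : Fin (q + 1)) z, z ∈ TN P q → tDegen q i z ∈ TN P (q + 1)) ∧
    (∀ (q : ℕ) z, z ∈ TN P q → tCyc q z ∈ TN P q) ∧
    (∀ (q : ℕ) z, z ∈ TN P q → tInv (⇑w) q z ∈ TN P q) ∧
    -- … and Ψ commutes with all the dihedral structure maps
    (∀ (q : ℕ) (i : Fin (q + 2)) z, z ∈ RepN P (q + 1) →
      Ψ q (rFace q i z) = tFace q i (Ψ (q + 1) z)) ∧
    (∀ (q : ℕ) (i : Fin (q + 1)) z, z ∈ RepN P q →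
      Ψ (q + 1) (rDegen q i z) = tDegen q i (Ψ q z)) ∧
    (∀ (q : ℕ) z, z ∈ RepN P q → Ψ q (rCyc q z) = tCyc q (Ψ q z)) ∧
    (∀ (q : ℕ) z, z ∈ RepN P q → Ψ q (rInv (⇑w) q z) = tInv (⇑w) q (Ψ q z)) := by
  intro Ψ
  exact ⟨bijOn_partialSumMap P,
    fun _ i _ hz => tFace_mem_TN i hz,
    fun _ i _ hz => tDegen_mem_TN i hz,
    fun _ _ hz => tCyc_mem_TN hz,
    fun _ _ hz => tInv_mem_TN hwP hz,
    fun q i z _ => partialSumMap_rFace q i z,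
    fun q i z _ => partialSumMap_rDegen q i z,
    fun q _ hz => partialSumMap_rCyc q hz.2,
    fun q z _ => partialSumMap_rInv q w z⟩

/-- For a commutative monoid `P` with involution (realized as a submonoid
of its group completion `G = P^gp`, with extended involution `w`), the dihedral replete
nerve `N^direp P` is isomorphic as a dihedral set to `P × N^σ(P^gp)`: the degreewise map
`((x₀, …, x_q), s) ↦ (s, (0, x₁, x₁ + x₂, …, x₁ + ⋯ + x_q))` is a bijection of the
replete simplices onto the simplices of `P × N^σ(P^gp)` commuting with all faces,
degeneracies, the cyclic operators and the involutions. -/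
theorem stmt11 {G : Type*} [AddCommGroup G] (P : AddSubmonoid G)
    (hgen : ∀ g : G, ∃ a ∈ P, ∃ b ∈ P, g = a - b)
    (w : G →+ G) (hw : ∀ g, w (w g) = g) (hwP : ∀ a ∈ P, w a ∈ P) :
    let Ψ : ∀ q : ℕ, ((Fin (q + 1) → G) × G) → (G × (Fin (q + 1) → G)) :=
      fun q z => (z.2, fun j =>
        ∑ i ∈ Finset.univ.filter (fun i : Fin (q + 1) => 0 < (i : ℕ) ∧ (i : ℕ) ≤ (j : ℕ)),
          z.1 i)
    -- Ψ is a degreewise bijection …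
    (∀ q, Set.BijOn (Ψ q) (RepN P q) (TN P q)) ∧
    -- … the target structure maps preserve the target simplices …
    (∀ (q : ℕ) (i : Fin (q + 2)) z, z ∈ TN P (q + 1) → tFace q i z ∈ TN P q) ∧
    (∀ (q : ℕ) (i : Fin (q + 1)) z, z ∈ TN P q → tDegen q i z ∈ TN P (q + 1)) ∧
    (∀ (q : ℕ) z, z ∈ TN P q → tCyc q z ∈ TN P q) ∧
    (∀ (q : ℕ) z, z ∈ TN P q → tInv (⇑w) q z ∈ TN P q) ∧
    -- … and Ψ commutes with all the dihedral structure maps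
    (∀ (q : ℕ) (i : Fin (q + 2)) z, z ∈ RepN P (q + 1) →
      Ψ q (rFace q i z) = tFace q i (Ψ (q + 1) z)) ∧
    (∀ (q : ℕ) (i : Fin (q + 1)) z, z ∈ RepN P q →
      Ψ (q + 1) (rDegen q i z) = tDegen q i (Ψ q z)) ∧
    (∀ (q : ℕ) z, z ∈ RepN P q → Ψ q (rCyc q z) = tCyc q (Ψ q z)) ∧
    (∀ (q : ℕ) z, z ∈ RepN P q → Ψ q (rInv (⇑w) q z) = tInv (⇑w) q (Ψ q z)) :=
  stmt11_general P w hwP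
end
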